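/- arXiv:1710.02877 — 2 statements merged into one kernel-verified Lean document; each statement's English description precedes it below -/
import Mathlib

section
/- Let G₁, …, Gₙ be NFAs whose pairwise shared events are all observable (contained in Σ_o), and let P be the projection to Σ_o. Then P(L(G₁ ‖ ⋯ ‖ Gₙ)) = P(L(G₁)) ‖ ⋯ ‖ P(L(Gₙ)), i.e., projection commutes with parallel composition of languages when all unobservable events are private. -/
/-- A nondeterministic finite automaton (all states marked): transition relation and initial states. -/
structure NFA' (Q E : Type) where
  δ : Q → E → Set Q
  I : Set Q

/-- Extended transition function on sets of states. -/
def NFA'.run {Q E : Type} (A : NFA' Q E) : List E → Set Q → Set Q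
  | [], S => S
  | a :: w, S => A.run w {q | ∃ p ∈ S, q ∈ A.δ p a}

/-- The language generated by the automaton. -/
def NFA'.lang {Q E : Type} (A : NFA' Q E) : Set (List E) :=
  {w | (A.run w A.I).Nonempty}

-- The natural projection to the observable events `S`: erase all events outside `S`.
open Classical in
noncomputable def proj {E : Type} (S : Set E) : List E → List E
  | [] => []
  | a :: w => if a ∈ S then a :: proj S w else proj S w

/-- Parallel (synchronous) composition of a family of NFAs `A i` with alphabets `S i`:
on an event `a`, every component whose alphabet contains `a` makes an `a`-transition,
all other components stay put; events outside `⋃ i, S i` are blocked. -/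
def parN {n : ℕ} {E : Type} {Qs : Fin n → Type} (S : Fin n → Set E)
    (A : ∀ i, NFA' (Qs i) E) : NFA' (∀ i, Qs i) E where
  δ := fun p a =>
    {q | (∃ i, a ∈ S i) ∧
         ∀ i, (a ∈ S i → q i ∈ (A i).δ (p i) a) ∧ (a ∉ S i → q i = p i)}
  I := {p | ∀ i, p i ∈ (A i).I}

/-! A word is accepted by the synchronous product iff it uses only events of `⋃ i, S i` and its
projection to each `S i` is accepted by `A i`, so the claim reduces to a statement about words.
Given an observable word `v` and words `uᵢ ∈ L(Aᵢ)` with `P(uᵢ) = P_{Sᵢ ∩ So}(v)`, a common lift of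
all `uᵢ` projecting to `v` is built along `v`: before the next observable event `a`, each `uᵢ` has
an unobservable prefix, whose events are private to component `i` because shared events are
observable. These prefixes can therefore be concatenated in any order, and are followed by `a`,
which advances exactly the components whose alphabet contains it. -/

section Proj

variable {E : Type}

open Classical in
theorem proj_eq_filter (T : Set E) (w : List E) : proj T w = w.filter (· ∈ T) := by
  induction w with
  | nil => rfl
  | cons a w ih => by_cases ha : a ∈ T <;> simp [proj, ha, ih]

theorem proj_append (T : Set E) (w w' : List E) : proj T (w ++ w') = proj T w ++ proj T w' := by
  simp [proj_eq_filter]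

theorem mem_proj {T : Set E} {w : List E} {a : E} : a ∈ proj T w ↔ a ∈ w ∧ a ∈ T := by
  simp [proj_eq_filter]

theorem proj_eq_nil_iff {T : Set E} {w : List E} : proj T w = [] ↔ ∀ a ∈ w, a ∉ T := by
  simp [proj_eq_filter]

theorem proj_proj (T T' : Set E) (w : List E) : proj T (proj T' w) = proj (T ∩ T') w := by
  simp only [proj_eq_filter, List.filter_filter]
  exact List.filter_congr fun a _ => by rw [Bool.eq_iff_iff]; simp

theorem proj_eq_self {T : Set E} {w : List E} (h : ∀ a ∈ w, a ∈ T) : proj T w = w := by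
  simpa [proj_eq_filter] using h

theorem proj_eq_cons_iff {T : Set E} {w v : List E} {a : E} :
    proj T w = a :: v ↔ ∃ x y, w = x ++ a :: y ∧ proj T x = [] ∧ a ∈ T ∧ proj T y = v := by
  simp [proj_eq_filter, List.filter_eq_cons_iff]

theorem proj_cons_of_mem {T : Set E} {a : E} (ha : a ∈ T) (w : List E) :
    proj T (a :: w) = a :: proj T w := by
  simp [proj, ha]

theorem proj_cons_of_notMem {T : Set E} {a : E} (ha : a ∉ T) (w : List E) :
    proj T (a :: w) = proj T w := by
  simp [proj, ha]

end Proj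

namespace NFA'

variable {Q E : Type} (A : NFA' Q E)

def Path : Q → List E → Q → Prop
  | p, [], q => q = p
  | p, a :: w, q => ∃ r ∈ A.δ p a, Path r w q

theorem mem_run_iff_exists_path (w : List E) (T : Set Q) (q : Q) :
    q ∈ A.run w T ↔ ∃ p ∈ T, A.Path p w q := by
  induction w generalizing T with
  | nil => simp [run, Path]
  | cons a w ih =>
    simp only [run, Path, ih, Set.mem_ofPred_eq]
    grind

theorem mem_lang_iff_exists_path (w : List E) :
    w ∈ A.lang ↔ ∃ p ∈ A.I, ∃ q, A.Path p w q := by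
  simp only [lang, Set.Nonempty, Set.mem_ofPred_eq, mem_run_iff_exists_path]
  tauto

theorem path_proj_cons_iff (T : Set E) (a : E) (w : List E) (p q : Q) :
    A.Path p (proj T (a :: w)) q ↔
      ∃ r, (a ∈ T → r ∈ A.δ p a) ∧ (a ∉ T → r = p) ∧ A.Path r (proj T w) q := by
  by_cases ha : a ∈ T
  · simp [proj_cons_of_mem ha, Path, ha]
  · simp [proj_cons_of_notMem ha, ha]

theorem forall_mem_of_mem_lang {T : Set E} (hT : ∀ q a, a ∉ T → A.δ q a = ∅) {w : List E}
    (hw : w ∈ A.lang) : ∀ a ∈ w, a ∈ T := by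
  obtain ⟨p, -, q, hpath⟩ := (A.mem_lang_iff_exists_path w).1 hw
  clear hw
  induction w generalizing p with
  | nil => simp
  | cons b w ih =>
    obtain ⟨r, hr, hpath⟩ := hpath
    have hb : b ∈ T := by
      by_contra hb
      simp [hT p b hb] at hr
    simpa [hb] using ih r hpath

end NFA'

section parN

variable {n : ℕ} {E : Type} {Qs : Fin n → Type} (S : Fin n → Set E) (A : ∀ i, NFA' (Qs i) E)

theorem mem_parN_δ (p r : ∀ i, Qs i) (a : E) :
    r ∈ (parN S A).δ p a ↔
      (∃ i, a ∈ S i) ∧ ∀ i, (a ∈ S i → r i ∈ (A i).δ (p i) a) ∧ (a ∉ S i → r i = p i) :=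
  Iff.rfl

theorem parN_path_iff (w : List E) (p q : ∀ i, Qs i) :
    (parN S A).Path p w q ↔ (∀ a ∈ w, ∃ i, a ∈ S i) ∧ ∀ i, (A i).Path (p i) (proj (S i) w) (q i) := by
  induction w generalizing p with
  | nil => simp [NFA'.Path, proj, funext_iff]
  | cons a w ih =>
    simp only [NFA'.Path, List.forall_mem_cons, NFA'.path_proj_cons_iff, Classical.skolem (b := Qs),
      ih, mem_parN_δ]
    constructor
    · rintro ⟨r, ⟨ha, hr⟩, hw, hpath⟩
      exact ⟨⟨ha, hw⟩, r, fun i => ⟨(hr i).1, (hr i).2, hpath i⟩⟩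
    · rintro ⟨⟨ha, hw⟩, r, hr⟩
      exact ⟨r, ⟨ha, fun i => ⟨(hr i).1, (hr i).2.1⟩⟩, hw, fun i => (hr i).2.2⟩

theorem mem_lang_parN_iff (w : List E) :
    w ∈ (parN S A).lang ↔ (∀ a ∈ w, ∃ i, a ∈ S i) ∧ ∀ i, proj (S i) w ∈ (A i).lang := by
  simp only [NFA'.mem_lang_iff_exists_path, parN_path_iff]
  constructor
  · rintro ⟨p, hp, q, hw, hpath⟩
    exact ⟨hw, fun i => ⟨p i, hp i, q i, hpath i⟩⟩
  · rintro ⟨hw, h⟩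
    choose p hp q hpath using h
    exact ⟨p, hp, q, hw, hpath⟩

end parN

section Lift

variable {ι E : Type} (S : ι → Set E)

theorem proj_flatMap_of_private {x : ι → List E} (hx : ∀ i, ∀ a ∈ x i, a ∈ S i)
    (hpriv : ∀ i j, i ≠ j → ∀ a ∈ x i, a ∉ S j) {l : List ι} (hl : l.Nodup) {j : ι} (hj : j ∈ l) :
    proj (S j) (l.flatMap x) = x j := by
  induction l with
  | nil => simp at hj
  | cons i l ih =>
    rw [List.flatMap_cons, proj_append]
    obtain ⟨hil, hl⟩ := List.nodup_cons.1 hl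
    by_cases hij : i = j
    · subst hij
      have hrest : proj (S i) (l.flatMap x) = [] := by
        simp only [proj_eq_nil_iff, List.mem_flatMap]
        rintro a ⟨k, hk, ha⟩
        exact hpriv k i (ne_of_mem_of_not_mem hk hil) a ha
      rw [proj_eq_self (hx i), hrest, List.append_nil]
    · rw [proj_eq_nil_iff.2 (hpriv i j hij), ih hl ((List.mem_cons.1 hj).resolve_left (Ne.symm hij)),
        List.nil_append]

variable {S} {So : Set E}

theorem exists_eq_append_of_proj_eq_proj_cons {T : Set E} {u v : List E} {a : E} (ha : a ∈ So)
    (h : proj So u = proj (T ∩ So) (a :: v)) :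
    ∃ x y, u = x ++ proj T [a] ++ y ∧ proj So x = [] ∧ proj So y = proj (T ∩ So) v := by
  by_cases haT : a ∈ T
  · rw [proj_cons_of_mem (Set.mem_inter haT ha), proj_eq_cons_iff] at h
    obtain ⟨x, y, rfl, hx, -, hy⟩ := h
    exact ⟨x, y, by simp [proj, haT], hx, hy⟩
  · rw [proj_cons_of_notMem fun h => haT h.1] at h
    exact ⟨[], u, by simp [proj, haT], rfl, h⟩

theorem exists_interleaving_of_proj_eq_nil [Fintype ι] (hshared : ∀ i j, i ≠ j → S i ∩ S j ⊆ So)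
    {x : ι → List E} (hx : ∀ i, ∀ a ∈ x i, a ∈ S i) (hxo : ∀ i, proj So (x i) = []) :
    ∃ w, (∀ a ∈ w, ∃ i, a ∈ S i) ∧ proj So w = [] ∧ ∀ j, proj (S j) w = x j := by
  have hpriv : ∀ i j, i ≠ j → ∀ a ∈ x i, a ∉ S j := fun i j hij a ha haj =>
    proj_eq_nil_iff.1 (hxo i) a ha (hshared i j hij ⟨hx i a ha, haj⟩)
  refine ⟨Finset.univ.toList.flatMap x, ?_, ?_, fun j => ?_⟩
  · simp only [List.mem_flatMap]
    rintro a ⟨i, -, ha⟩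
    exact ⟨i, hx i a ha⟩
  · simp only [proj_eq_nil_iff, List.mem_flatMap]
    rintro a ⟨i, -, ha⟩
    exact proj_eq_nil_iff.1 (hxo i) a ha
  · exact proj_flatMap_of_private S hx hpriv (Finset.nodup_toList _) (by simp)

theorem exists_lift_of_proj_eq_proj [Fintype ι] (hshared : ∀ i j, i ≠ j → S i ∩ S j ⊆ So)
    (v : List E) (hv : ∀ a ∈ v, ∃ i, a ∈ S i ∩ So) (u : ι → List E) (hu : ∀ i, ∀ a ∈ u i, a ∈ S i)
    (huv : ∀ i, proj So (u i) = proj (S i ∩ So) v) :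
    ∃ w, (∀ a ∈ w, ∃ i, a ∈ S i) ∧ proj So w = v ∧ ∀ i, proj (S i) w = u i := by
  induction v generalizing u with
  | nil => exact exists_interleaving_of_proj_eq_nil hshared hu huv
  | cons a v ih =>
    obtain ⟨i₀, hai₀, haSo⟩ := hv a List.mem_cons_self
    choose x y hxy hxo hyv using fun i => exists_eq_append_of_proj_eq_proj_cons haSo (huv i)
    have hxS : ∀ i, ∀ b ∈ x i, b ∈ S i := fun i b hb => hu i b (by simp [hxy i, hb])
    have hyS : ∀ i, ∀ b ∈ y i, b ∈ S i := fun i b hb => hu i b (by simp [hxy i, hb])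
    obtain ⟨w₀, hw₀S, hw₀o, hw₀x⟩ := exists_interleaving_of_proj_eq_nil hshared hxS hxo
    obtain ⟨w₁, hw₁S, hw₁o, hw₁y⟩ := ih (fun b hb => hv b (List.mem_cons_of_mem a hb)) y hyS hyv
    refine ⟨w₀ ++ [a] ++ w₁, ?_, ?_, fun i => ?_⟩
    · simp only [List.mem_append, List.mem_singleton]
      rintro b ((hb | rfl) | hb)
      exacts [hw₀S b hb, ⟨i₀, hai₀⟩, hw₁S b hb]
    · simp [proj_append, hw₀o, hw₁o, proj, haSo]
    · rw [proj_append, proj_append, hw₀x, hw₁y, hxy]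

end Lift

/-- if all pairwise shared events are observable, then projection
commutes with parallel composition:
`P(L(G₁ ‖ ⋯ ‖ Gₙ)) = P(L(G₁)) ‖ ⋯ ‖ P(L(Gₙ))`, where the right-hand side is the
parallel composition of languages over the alphabets `Σᵢ ∩ Σ_o` (defined via
inverse projections). -/
theorem proj_lang_parN_eq_parN_proj_langs
    {n : ℕ} {E : Type} {Qs : Fin n → Type}
    (S : Fin n → Set E) (So : Set E) (A : ∀ i, NFA' (Qs i) E)
    (hshared : ∀ i j, i ≠ j → S i ∩ S j ⊆ So)
    (hown : ∀ i (q : Qs i) (a : E), a ∉ S i → (A i).δ q a = ∅) :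
    proj So '' (parN S A).lang =
      {v : List E | (∀ a ∈ v, ∃ i, a ∈ S i ∩ So) ∧
        ∀ i, proj (S i ∩ So) v ∈ proj So '' (A i).lang} := by
  ext v
  constructor
  · rintro ⟨w, hw, rfl⟩
    obtain ⟨hwS, hwA⟩ := (mem_lang_parN_iff S A w).1 hw
    refine ⟨fun a ha => ?_, fun i => ⟨proj (S i) w, hwA i, ?_⟩⟩
    · obtain ⟨haw, haSo⟩ := mem_proj.1 ha
      obtain ⟨i, hi⟩ := hwS a haw
      exact ⟨i, hi, haSo⟩
    · rw [proj_proj, proj_proj, Set.inter_assoc, Set.inter_self, Set.inter_comm]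
  · rintro ⟨hv, hvA⟩
    choose u hu huv using hvA
    obtain ⟨w, hwS, hwv, hwu⟩ := exists_lift_of_proj_eq_proj hshared v hv u
      (fun i => (A i).forall_mem_of_mem_lang (hown i) (hu i)) huv
    exact ⟨w, (mem_lang_parN_iff S A w).2 ⟨hwS, fun i => hwu i ▸ hu i⟩, hwv⟩
end

section
/- Let G be a DES with no unobservable cycles and deadlock free. Then every infinite trajectory s ∈ L^ω(G) has, for every n ∈ ℕ, a finite prefix t with |P(t)| > n; that is, observations along any infinite trajectory grow unboundedly. -/
/-- The prefix of length `m` of an infinite event sequence. -/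
def pref {E : Type} (s : ℕ → E) (m : ℕ) : List E := List.ofFn fun i : Fin m => s i

/-- The segment of an infinite event sequence between positions `m` and `m'`. -/
def seg {E : Type} (s : ℕ → E) (m m' : ℕ) : List E :=
  List.ofFn fun i : Fin (m' - m) => s (m + i)

/-- `s` is an infinite trajectory of the system: all its finite prefixes are generated. -/
def InfTraj {Q E : Type} (A : NFA' Q E) (s : ℕ → E) : Prop :=
  ∀ m : ℕ, pref s m ∈ A.lang

/-- The current-state estimate `R_G(t)` after observing `P(t)`,
where `So` is the set of observable events. -/
def Rst {Q E : Type} (A : NFA' Q E) (So : Set E) (t : List E) : Set Q :=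
  {x | ∃ t' ∈ A.lang, proj So t' = proj So t ∧ x ∈ A.run t' A.I}

/-- The system is deadlock free: every state enables some event. -/
def DeadlockFree {Q E : Type} (A : NFA' Q E) : Prop :=
  ∀ q : Q, ∃ a : E, (A.δ q a).Nonempty

/-- No cycle consists solely of unobservable events
(`So` is the set of observable events). -/
def NoUnobservableCycle {Q E : Type} (A : NFA' Q E) (So : Set E) : Prop :=
  ∀ (q : Q) (w : List E), w ≠ [] → (∀ a ∈ w, a ∉ So) → q ∉ A.run w {q}

/-- Weak detectability w.r.t. the observable events `So`. -/
def WeaklyDetectable {Q E : Type} (A : NFA' Q E) (So : Set E) : Prop :=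
  ∃ n : ℕ, ∃ s : ℕ → E, InfTraj A s ∧
    ∀ m : ℕ, (proj So (pref s m)).length > n → ∃ x, Rst A So (pref s m) = {x}

/-- Strong detectability w.r.t. the observable events `So`. -/
def StronglyDetectable {Q E : Type} (A : NFA' Q E) (So : Set E) : Prop :=
  ∃ n : ℕ, ∀ s : ℕ → E, InfTraj A s →
    ∀ m : ℕ, (proj So (pref s m)).length > n → ∃ x, Rst A So (pref s m) = {x}

/-- Weak periodic detectability w.r.t. the observable events `So`. -/
def WeaklyPeriodicallyDetectable {Q E : Type} (A : NFA' Q E) (So : Set E) : Prop :=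
  ∃ n : ℕ, ∃ s : ℕ → E, InfTraj A s ∧
    ∀ m : ℕ, ∃ m' : ℕ, m ≤ m' ∧ (proj So (seg s m m')).length < n ∧
      ∃ x, Rst A So (pref s m') = {x}

/-- Strong periodic detectability w.r.t. the observable events `So`. -/
def StronglyPeriodicallyDetectable {Q E : Type} (A : NFA' Q E) (So : Set E) : Prop :=
  ∃ n : ℕ, ∀ s : ℕ → E, InfTraj A s →
    ∀ m : ℕ, ∃ m' : ℕ, m ≤ m' ∧ (proj So (seg s m m')).length < n ∧
      ∃ x, Rst A So (pref s m') = {x}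

theorem pref_add {E : Type} (s : ℕ → E) (m d : ℕ) :
    pref s (m + d) = pref s m ++ seg s m (m + d) := by
  simp only [pref, seg, Nat.add_sub_cancel_left]
  exact List.ofFn_add

theorem proj_append_s14 {E : Type} (S : Set E) (u v : List E) :
    proj S (u ++ v) = proj S u ++ proj S v := by
  induction u with
  | nil => rfl
  | cons a u ih =>
    simp only [List.cons_append, proj]
    split_ifs <;> simp [ih]

theorem length_proj_pref_mono {E : Type} (S : Set E) (s : ℕ → E) {m k : ℕ} (h : m ≤ k) :
    (proj S (pref s m)).length ≤ (proj S (pref s k)).length := by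
  obtain ⟨d, rfl⟩ := Nat.exists_eq_add_of_le h
  simp [pref_add, proj_append_s14]

theorem length_proj_pref_succ {E : Type} {S : Set E} {s : ℕ → E} {k : ℕ} (h : s k ∈ S) :
    (proj S (pref s (k + 1))).length = (proj S (pref s k)).length + 1 := by
  have hk : pref s (k + 1) = pref s k ++ [s k] := by simpa [seg] using pref_add s k 1
  simp [hk, proj_append_s14, proj, h]

section Height

variable {α : Type*} {r : α → α → Prop}

noncomputable def transGenHeight (r : α → α → Prop) (a : α) : ℕ :=
  {b | Relation.TransGen r b a}.ncard

variable [Finite α]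

theorem transGenHeight_lt_of_rel (hr : ∀ a, ¬ Relation.TransGen r a a) {a b : α}
    (hab : r a b) : transGenHeight r a < transGenHeight r b := by
  refine Set.ncard_lt_ncard ⟨fun c hc => Relation.TransGen.tail hc hab, fun hsub => ?_⟩
  exact hr a (hsub (Relation.TransGen.single hab))

theorem transGenHeight_lt_card (hr : ∀ a, ¬ Relation.TransGen r a a) (a : α) :
    transGenHeight r a < Nat.card α :=
  Set.ncard_lt_card fun h => hr a (Set.eq_univ_iff_forall.mp h a)

end Height

namespace NFA'

variable {Q E : Type} (A : NFA' Q E)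

def toNFA : NFA E Q := ⟨A.δ, A.I, Set.univ⟩

theorem run_eq_evalFrom (w : List E) (S : Set Q) : A.run w S = A.toNFA.evalFrom S w := by
  induction w generalizing S with
  | nil => rfl
  | cons a w ih =>
    rw [run, ih, NFA.evalFrom_cons]
    congr 1
    ext q
    simp [NFA.mem_stepSet, toNFA]

theorem mem_run_iff_exists {w : List E} {S : Set Q} {q : Q} :
    q ∈ A.run w S ↔ ∃ p ∈ S, q ∈ A.run w {p} := by
  simp only [run_eq_evalFrom]
  exact NFA.mem_evalFrom_iff_exists

theorem mem_run_append_iff {u v : List E} {S : Set Q} {q : Q} :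
    q ∈ A.run (u ++ v) S ↔ ∃ p ∈ A.run u S, q ∈ A.run v {p} := by
  rw [run_eq_evalFrom, NFA.evalFrom_append, ← run_eq_evalFrom, mem_run_iff_exists,
    run_eq_evalFrom]

def UnobsStep (So : Set E) (p q : Q) : Prop :=
  ∃ a ∉ So, q ∈ A.δ p a

theorem exists_run_of_transGen_unobsStep {So : Set E} {p q : Q}
    (h : Relation.TransGen (A.UnobsStep So) p q) :
    ∃ w ≠ [], (∀ a ∈ w, a ∉ So) ∧ q ∈ A.run w {p} := by
  induction h using Relation.TransGen.head_induction_on with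
  | single hstep =>
    obtain ⟨a, ha, hq⟩ := hstep
    exact ⟨[a], by simp, by simpa using ha, by simpa [run] using hq⟩
  | head hstep _ ih =>
    obtain ⟨a, ha, hp⟩ := hstep
    obtain ⟨w, -, hw, hq⟩ := ih
    refine ⟨a :: w, by simp, by simpa [ha] using hw, ?_⟩
    rw [← List.singleton_append, mem_run_append_iff]
    exact ⟨_, by simpa [run] using hp, hq⟩

theorem not_transGen_unobsStep_self {So : Set E} (h : NoUnobservableCycle A So) :
    ∀ q, ¬ Relation.TransGen (A.UnobsStep So) q q := fun q hq =>
  let ⟨w, hne, hw, hrun⟩ := A.exists_run_of_transGen_unobsStep hq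
  h q w hne hw hrun

theorem transGenHeight_add_length_le [Finite Q] {So : Set E} (hnc : NoUnobservableCycle A So)
    {w : List E} (hw : ∀ a ∈ w, a ∉ So) {p q : Q} (hq : q ∈ A.run w {p}) :
    transGenHeight (A.UnobsStep So) p + w.length ≤ transGenHeight (A.UnobsStep So) q := by
  induction w generalizing p with
  | nil => simp_all [run]
  | cons a w ih =>
    rw [← List.singleton_append, mem_run_append_iff] at hq
    obtain ⟨p', hp', hq'⟩ := hq
    have hstep : A.UnobsStep So p p' := ⟨a, hw a (by simp), by simpa [run] using hp'⟩
    have := transGenHeight_lt_of_rel (A.not_transGen_unobsStep_self hnc) hstep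
    have := ih (fun b hb => hw b (by simp [hb])) hq'
    simp only [List.length_cons]
    omega

theorem length_lt_card_of_mem_run [Finite Q] {So : Set E} (hnc : NoUnobservableCycle A So)
    {w : List E} (hw : ∀ a ∈ w, a ∉ So) {p q : Q} (hq : q ∈ A.run w {p}) :
    w.length < Nat.card Q := by
  have := A.transGenHeight_add_length_le hnc hw hq
  have := transGenHeight_lt_card (A.not_transGen_unobsStep_self hnc) q
  omega

end NFA'

theorem InfTraj.exists_ge_mem {Q E : Type} [Finite Q] {A : NFA' Q E} {So : Set E} {s : ℕ → E}
    (hs : InfTraj A s) (hnc : NoUnobservableCycle A So) (m : ℕ) : ∃ k ≥ m, s k ∈ So := by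
  by_contra! hunobs
  obtain ⟨q, hq⟩ := hs (m + Nat.card Q)
  rw [pref_add, NFA'.mem_run_append_iff] at hq
  obtain ⟨p, -, hq⟩ := hq
  have hw : ∀ a ∈ seg s m (m + Nat.card Q), a ∉ So := by
    simp only [seg, List.mem_ofFn]
    rintro _ ⟨i, rfl⟩
    exact hunobs _ (Nat.le_add_right m i)
  simpa [seg] using A.length_lt_card_of_mem_run hnc hw hq

theorem observations_grow_unboundedly_general {Q E : Type} [Fintype Q]
    (A : NFA' Q E) (Suo : Set E)
    (hnc : NoUnobservableCycle A Suoᶜ)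
    (s : ℕ → E) (hs : InfTraj A s) (n : ℕ) :
    ∃ m : ℕ, (proj Suoᶜ (pref s m)).length > n := by
  suffices h : ∀ n, ∃ m, n ≤ (proj Suoᶜ (pref s m)).length from h (n + 1)
  intro n
  induction n with
  | zero => exact ⟨0, Nat.zero_le _⟩
  | succ n ih =>
    obtain ⟨m, hm⟩ := ih
    obtain ⟨k, hmk, hk⟩ := hs.exists_ge_mem hnc m
    have := length_proj_pref_mono Suoᶜ s hmk
    exact ⟨k + 1, by rw [length_proj_pref_succ hk]; omega⟩

/-- in a finite-state, deadlock-free DES with no unobservable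
cycles, observations along any infinite trajectory grow unboundedly: every
infinite trajectory has, for every `n`, a finite prefix whose observation is
longer than `n`. -/
theorem observations_grow_unboundedly {Q E : Type} [Fintype Q]
    (A : NFA' Q E) (Suo : Set E)
    (hdf : DeadlockFree A) (hnc : NoUnobservableCycle A Suoᶜ)
    (s : ℕ → E) (hs : InfTraj A s) (n : ℕ) :
    ∃ m : ℕ, (proj Suoᶜ (pref s m)).length > n :=
  observations_grow_unboundedly_general A Suo hnc s hs n
end
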